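/- Let A = (a_{ij}) be a constant real uniformly elliptic 2×2 matrix, let A₀ = (A + Aᵀ)/2 be its symmetric part, and let S be the positive-definite square root of A₀ (SᵀS = A₀). Let U ⊂ ℝ² be open and let u be a smooth function on U with Σ_{i,j=1}^2 a_{ij} ∂_i∂_j u = 0 on U and ∇u(x) ≠ 0 for every x ∈ U. Then div(A₀ ∇ log|S∇u|²) = Σ_{i,j=1}^2 (A₀)_{ij} ∂_i∂_j (log|S∇u|²) = 0 on U. -/

import Mathlib

open Matrix

noncomputable section

/-- The `i`-th partial derivative of `f` at `x` (via `fderiv`). -/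
def pd (i : Fin 2) (f : (Fin 2 → ℝ) → ℝ) (x : Fin 2 → ℝ) : ℝ :=
  fderiv ℝ f x (Pi.single i 1)

/-- The gradient of `f` at `x`. -/
def grad (f : (Fin 2 → ℝ) → ℝ) (x : Fin 2 → ℝ) : Fin 2 → ℝ := fun i => pd i f x

section Aux

variable {U : Set (Fin 2 → ℝ)} {f g : (Fin 2 → ℝ) → ℝ} {x : Fin 2 → ℝ}

lemma pd_contDiffOn (hU : IsOpen U) (hf : ContDiffOn ℝ (⊤ : ℕ∞) f U) (j : Fin 2) :
    ContDiffOn ℝ (⊤ : ℕ∞) (pd j f) U := by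
  have h1 : ContDiffOn ℝ (⊤ : ℕ∞) (fderiv ℝ f) U := hf.fderiv_of_isOpen hU (by simp)
  exact h1.clm_apply contDiffOn_const

lemma pd_congr_nhds (h : f =ᶠ[nhds x] g) (i : Fin 2) : pd i f x = pd i g x := by
  unfold pd; rw [h.fderiv_eq]

lemma pd_const (c : ℝ) (i : Fin 2) : pd i (fun _ => c) x = 0 := by
  simp [pd, fderiv_const]

lemma pd_add (hf : DifferentiableAt ℝ f x) (hg : DifferentiableAt ℝ g x) (i : Fin 2) :
    pd i (fun y => f y + g y) x = pd i f x + pd i g x := by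
  unfold pd; rw [fderiv_fun_add hf hg]; rfl

lemma pd_mul (hf : DifferentiableAt ℝ f x) (hg : DifferentiableAt ℝ g x) (i : Fin 2) :
    pd i (fun y => f y * g y) x = pd i f x * g x + f x * pd i g x := by
  unfold pd; rw [fderiv_fun_mul hf hg]; simp; ring

lemma pd_const_mul (hf : DifferentiableAt ℝ f x) (c : ℝ) (i : Fin 2) :
    pd i (fun y => c * f y) x = c * pd i f x := by
  unfold pd; rw [fderiv_const_mul hf]; rfl

lemma pd_inv (hf : DifferentiableAt ℝ f x) (hfx : f x ≠ 0) (i : Fin 2) :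
    pd i (fun y => (f y)⁻¹) x = -pd i f x / (f x)^2 := by
  unfold pd
  rw [show (fun y => (f y)⁻¹) = (fun t : ℝ => t⁻¹) ∘ f from rfl,
    ((hasDerivAt_inv hfx).comp_hasFDerivAt x hf.hasFDerivAt).fderiv]
  simp; ring

lemma pd_log (hf : DifferentiableAt ℝ f x) (hfx : f x ≠ 0) (i : Fin 2) :
    pd i (fun y => Real.log (f y)) x = pd i f x / f x := by
  unfold pd
  rw [show (fun y => Real.log (f y)) = Real.log ∘ f from rfl,
    ((Real.hasDerivAt_log hfx).comp_hasFDerivAt x hf.hasFDerivAt).fderiv]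
  simp [div_eq_inv_mul]

lemma diffAt_of_contDiffOn {F : Type*} [NormedAddCommGroup F] [NormedSpace ℝ F]
    {f : (Fin 2 → ℝ) → F} (hU : IsOpen U) (hf : ContDiffOn ℝ (⊤ : ℕ∞) f U) (hx : x ∈ U) :
    DifferentiableAt ℝ f x :=
  (hf.differentiableOn (by simp)).differentiableAt (hU.mem_nhds hx)

lemma pd_pd_eq_fderiv2 (hU : IsOpen U) (hf : ContDiffOn ℝ (⊤ : ℕ∞) f U) (hx : x ∈ U) (i j : Fin 2) :
    pd i (pd j f) x = fderiv ℝ (fderiv ℝ f) x (Pi.single i 1) (Pi.single j 1) := by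
  have hdf : DifferentiableAt ℝ (fderiv ℝ f) x :=
    diffAt_of_contDiffOn hU (hf.fderiv_of_isOpen hU (by simp)) hx
  unfold pd
  rw [fderiv_clm_apply hdf (differentiableAt_const _)]
  simp

lemma pd_symm (hU : IsOpen U) (hf : ContDiffOn ℝ (⊤ : ℕ∞) f U) (hx : x ∈ U) (i j : Fin 2) :
    pd i (pd j f) x = pd j (pd i f) x := by
  rw [pd_pd_eq_fderiv2 hU hf hx, pd_pd_eq_fderiv2 hU hf hx]
  exact (ContDiffAt.isSymmSndFDerivAt (hf.contDiffAt (hU.mem_nhds hx)) (by simp [minSmoothness_of_isRCLikeNormedField]; exact WithTop.coe_le_coe.mpr le_top)) _ _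

lemma pd_comb {f1 f2 f3 f4 : (Fin 2 → ℝ) → ℝ} (c1 c2 c3 c4 : ℝ)
    (h1 : DifferentiableAt ℝ f1 x) (h2 : DifferentiableAt ℝ f2 x)
    (h3 : DifferentiableAt ℝ f3 x) (h4 : DifferentiableAt ℝ f4 x) (i : Fin 2) :
    pd i (fun y => c1 * f1 y + c2 * f2 y + c3 * f3 y + c4 * f4 y) x
      = c1 * pd i f1 x + c2 * pd i f2 x + c3 * pd i f3 x + c4 * pd i f4 x := by
  rw [pd_add (((h1.const_mul c1).fun_add (h2.const_mul c2)).fun_add (h3.const_mul c3))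
      (h4.const_mul c4),
    pd_add ((h1.const_mul c1).fun_add (h2.const_mul c2)) (h3.const_mul c3),
    pd_add (h1.const_mul c1) (h2.const_mul c2),
    pd_const_mul h1, pd_const_mul h2, pd_const_mul h3, pd_const_mul h4]

lemma aux_sv (A S : Matrix (Fin 2) (Fin 2) ℝ)
    (hSsq : Sᵀ * S = (1 / 2 : ℝ) • (A + Aᵀ)) (v : Fin 2 → ℝ) :
    S.mulVec v ⬝ᵥ S.mulVec v =
      A 0 0 * (v 0 * v 0) + (A 0 1 + A 1 0)/2 * (v 0 * v 1)
      + (A 0 1 + A 1 0)/2 * (v 1 * v 0) + A 1 1 * (v 1 * v 1) := by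
  have h00 := congrFun (congrFun hSsq 0) 0
  have h01 := congrFun (congrFun hSsq 0) 1
  have h10 := congrFun (congrFun hSsq 1) 0
  have h11 := congrFun (congrFun hSsq 1) 1
  simp [Matrix.mul_apply, Fin.sum_univ_two, Matrix.smul_apply, Matrix.add_apply,
    Matrix.transpose_apply] at h00 h01 h10 h11
  simp [Matrix.mulVec, dotProduct, Fin.sum_univ_two]
  linear_combination (v 0 * v 0) * h00 + (v 0 * v 1) * h01 + (v 1 * v 0) * h10 +
    (v 1 * v 1) * h11

lemma aux_pos (A : Matrix (Fin 2) (Fin 2) ℝ) (lam : ℝ) (hlam : 1 ≤ lam)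
    (hell1 : ∀ ξ : Fin 2 → ℝ, lam⁻¹ * (ξ ⬝ᵥ ξ) ≤ ξ ⬝ᵥ A.mulVec ξ)
    (v : Fin 2 → ℝ) (hv : v ≠ 0) :
    0 < A 0 0 * (v 0 * v 0) + (A 0 1 + A 1 0)/2 * (v 0 * v 1)
      + (A 0 1 + A 1 0)/2 * (v 1 * v 0) + A 1 1 * (v 1 * v 1) := by
  have h := hell1 v
  simp [Matrix.mulVec, dotProduct, Fin.sum_univ_two] at h
  have hv2 : 0 < v 0 * v 0 + v 1 * v 1 := by
    have : v 0 ≠ 0 ∨ v 1 ≠ 0 := by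
      by_contra hc
      push_neg at hc
      refine hv (funext fun i => ?_)
      fin_cases i
      · simpa using hc.1
      · simpa using hc.2
    rcases this with h0 | h0
    · nlinarith [sq_nonneg (v 1), mul_self_pos.mpr h0]
    · nlinarith [sq_nonneg (v 0), mul_self_pos.mpr h0]
  have hlp : 0 < lam⁻¹ := by positivity
  nlinarith [mul_pos hlp hv2]

end Aux

set_option maxHeartbeats 2000000 in
theorem stmt15 (A : Matrix (Fin 2) (Fin 2) ℝ) (lam : ℝ) (hlam : 1 ≤ lam)
    (hell1 : ∀ ξ : Fin 2 → ℝ, lam⁻¹ * (ξ ⬝ᵥ ξ) ≤ ξ ⬝ᵥ A.mulVec ξ)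
    (hell2 : ∀ ξ η : Fin 2 → ℝ,
      η ⬝ᵥ A.mulVec ξ ≤ lam * (Real.sqrt (ξ ⬝ᵥ ξ) * Real.sqrt (η ⬝ᵥ η)))
    (S : Matrix (Fin 2) (Fin 2) ℝ) (hS : S.PosDef)
    (hSsq : Sᵀ * S = (1 / 2 : ℝ) • (A + Aᵀ))
    (U : Set (Fin 2 → ℝ)) (hU : IsOpen U)
    (u : (Fin 2 → ℝ) → ℝ) (hu : ContDiffOn ℝ (⊤ : ℕ∞) u U)
    (hpde : ∀ x ∈ U, ∑ i, ∑ j, A i j * pd i (fun y => pd j u y) x = 0)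
    (hgrad : ∀ x ∈ U, grad u x ≠ 0) :
    ∀ x ∈ U,
      ∑ i, ∑ j, ((1 / 2 : ℝ) • (A + Aᵀ)) i j *
        pd i (fun y => pd j
          (fun z => Real.log (S.mulVec (grad u z) ⬝ᵥ S.mulVec (grad u z))) y) x = 0 := by
  intro x hx
  obtain ⟨q, hq⟩ : ∃ q : (Fin 2 → ℝ) → ℝ, q = fun y =>
      A 0 0 * (pd 0 u y * pd 0 u y) + (A 0 1 + A 1 0)/2 * (pd 0 u y * pd 1 u y)
      + (A 0 1 + A 1 0)/2 * (pd 1 u y * pd 0 u y) + A 1 1 * (pd 1 u y * pd 1 u y) := ⟨_, rfl⟩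
  -- rewrite the inner function
  have hfun : (fun z => Real.log (S.mulVec (grad u z) ⬝ᵥ S.mulVec (grad u z)))
      = (fun z => Real.log (q z)) := by
    funext z
    rw [hq]
    exact congrArg Real.log (by simpa [grad] using aux_sv A S hSsq (grad u z))
  rw [hfun]
  -- smoothness and differentiability facts
  have hgC : ∀ k : Fin 2, ContDiffOn ℝ (⊤ : ℕ∞) (pd k u) U := fun k => pd_contDiffOn hU hu k
  have hqC : ContDiffOn ℝ (⊤ : ℕ∞) q U := by
    rw [hq]
    exact (((contDiffOn_const.mul ((hgC 0).mul (hgC 0))).add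
      (contDiffOn_const.mul ((hgC 0).mul (hgC 1)))).add
      (contDiffOn_const.mul ((hgC 1).mul (hgC 0)))).add
      (contDiffOn_const.mul ((hgC 1).mul (hgC 1)))
  have dg : ∀ (k : Fin 2) {y : Fin 2 → ℝ}, y ∈ U → DifferentiableAt ℝ (pd k u) y :=
    fun k {_} hy => diffAt_of_contDiffOn hU (hgC k) hy
  have dgg : ∀ (j k : Fin 2) {y : Fin 2 → ℝ}, y ∈ U → DifferentiableAt ℝ (pd j (pd k u)) y :=
    fun j k {_} hy => diffAt_of_contDiffOn hU (pd_contDiffOn hU (hgC k) j) hy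
  have dq : ∀ {y : Fin 2 → ℝ}, y ∈ U → DifferentiableAt ℝ q y :=
    fun {_} hy => diffAt_of_contDiffOn hU hqC hy
  have dDq : ∀ (j : Fin 2) {y : Fin 2 → ℝ}, y ∈ U → DifferentiableAt ℝ (pd j q) y :=
    fun j {_} hy => diffAt_of_contDiffOn hU (pd_contDiffOn hU hqC j) hy
  -- positivity
  have hqpos : ∀ y ∈ U, 0 < q y := by
    intro y hy
    rw [hq]
    simpa [grad] using aux_pos A lam hlam hell1 (grad u y) (hgrad y hy)
  have hqne : q x ≠ 0 := ne_of_gt (hqpos x hx)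
  -- first derivative of q
  have hDq : ∀ (j : Fin 2), ∀ y ∈ U, pd j q y =
      A 0 0 * (pd j (pd 0 u) y * pd 0 u y + pd 0 u y * pd j (pd 0 u) y)
      + (A 0 1 + A 1 0)/2 * (pd j (pd 0 u) y * pd 1 u y + pd 0 u y * pd j (pd 1 u) y)
      + (A 0 1 + A 1 0)/2 * (pd j (pd 1 u) y * pd 0 u y + pd 1 u y * pd j (pd 0 u) y)
      + A 1 1 * (pd j (pd 1 u) y * pd 1 u y + pd 1 u y * pd j (pd 1 u) y) := by
    intro j y hy
    rw [hq]
    rw [pd_comb (A 0 0) ((A 0 1 + A 1 0)/2) ((A 0 1 + A 1 0)/2) (A 1 1)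
        ((dg 0 hy).fun_mul (dg 0 hy)) ((dg 0 hy).fun_mul (dg 1 hy))
        ((dg 1 hy).fun_mul (dg 0 hy)) ((dg 1 hy).fun_mul (dg 1 hy)) j,
      pd_mul (dg 0 hy) (dg 0 hy) j, pd_mul (dg 0 hy) (dg 1 hy) j,
      pd_mul (dg 1 hy) (dg 0 hy) j, pd_mul (dg 1 hy) (dg 1 hy) j]
  -- second derivative of q at x
  have hP : ∀ i j : Fin 2, pd i (pd j q) x =
      A 0 0 * (pd i (pd j (pd 0 u)) x * pd 0 u x + pd j (pd 0 u) x * pd i (pd 0 u) x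
        + (pd i (pd 0 u) x * pd j (pd 0 u) x + pd 0 u x * pd i (pd j (pd 0 u)) x))
      + (A 0 1 + A 1 0)/2 * (pd i (pd j (pd 0 u)) x * pd 1 u x + pd j (pd 0 u) x * pd i (pd 1 u) x
        + (pd i (pd 0 u) x * pd j (pd 1 u) x + pd 0 u x * pd i (pd j (pd 1 u)) x))
      + (A 0 1 + A 1 0)/2 * (pd i (pd j (pd 1 u)) x * pd 0 u x + pd j (pd 1 u) x * pd i (pd 0 u) x
        + (pd i (pd 1 u) x * pd j (pd 0 u) x + pd 1 u x * pd i (pd j (pd 0 u)) x))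
      + A 1 1 * (pd i (pd j (pd 1 u)) x * pd 1 u x + pd j (pd 1 u) x * pd i (pd 1 u) x
        + (pd i (pd 1 u) x * pd j (pd 1 u) x + pd 1 u x * pd i (pd j (pd 1 u)) x)) := by
    intro i j
    have hcong : pd j q =ᶠ[nhds x] (fun y =>
        A 0 0 * (pd j (pd 0 u) y * pd 0 u y + pd 0 u y * pd j (pd 0 u) y)
        + (A 0 1 + A 1 0)/2 * (pd j (pd 0 u) y * pd 1 u y + pd 0 u y * pd j (pd 1 u) y)
        + (A 0 1 + A 1 0)/2 * (pd j (pd 1 u) y * pd 0 u y + pd 1 u y * pd j (pd 0 u) y)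
        + A 1 1 * (pd j (pd 1 u) y * pd 1 u y + pd 1 u y * pd j (pd 1 u) y)) := by
      filter_upwards [hU.mem_nhds hx] with y hy using hDq j y hy
    rw [pd_congr_nhds hcong i,
      pd_comb (A 0 0) ((A 0 1 + A 1 0)/2) ((A 0 1 + A 1 0)/2) (A 1 1)
        (((dgg j 0 hx).fun_mul (dg 0 hx)).fun_add ((dg 0 hx).fun_mul (dgg j 0 hx)))
        (((dgg j 0 hx).fun_mul (dg 1 hx)).fun_add ((dg 0 hx).fun_mul (dgg j 1 hx)))
        (((dgg j 1 hx).fun_mul (dg 0 hx)).fun_add ((dg 1 hx).fun_mul (dgg j 0 hx)))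
        (((dgg j 1 hx).fun_mul (dg 1 hx)).fun_add ((dg 1 hx).fun_mul (dgg j 1 hx))) i,
      pd_add ((dgg j 0 hx).fun_mul (dg 0 hx)) ((dg 0 hx).fun_mul (dgg j 0 hx)) i,
      pd_add ((dgg j 0 hx).fun_mul (dg 1 hx)) ((dg 0 hx).fun_mul (dgg j 1 hx)) i,
      pd_add ((dgg j 1 hx).fun_mul (dg 0 hx)) ((dg 1 hx).fun_mul (dgg j 0 hx)) i,
      pd_add ((dgg j 1 hx).fun_mul (dg 1 hx)) ((dg 1 hx).fun_mul (dgg j 1 hx)) i,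
      pd_mul (dgg j 0 hx) (dg 0 hx) i, pd_mul (dg 0 hx) (dgg j 0 hx) i,
      pd_mul (dgg j 0 hx) (dg 1 hx) i, pd_mul (dg 0 hx) (dgg j 1 hx) i,
      pd_mul (dgg j 1 hx) (dg 0 hx) i, pd_mul (dg 1 hx) (dgg j 0 hx) i,
      pd_mul (dgg j 1 hx) (dg 1 hx) i, pd_mul (dg 1 hx) (dgg j 1 hx) i]
  -- second derivative of log q at x
  have hL : ∀ i j : Fin 2, pd i (pd j (fun z => Real.log (q z))) x
      = pd i (pd j q) x * (q x)⁻¹ + pd j q x * (-pd i q x / (q x)^2) := by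
    intro i j
    have hcong : pd j (fun z => Real.log (q z)) =ᶠ[nhds x] fun y => pd j q y * (q y)⁻¹ := by
      filter_upwards [hU.mem_nhds hx] with y hy
      rw [pd_log (dq hy) (ne_of_gt (hqpos y hy)) j, div_eq_mul_inv]
    rw [pd_congr_nhds hcong i, pd_mul (dDq j hx) ((dq hx).fun_inv hqne) i,
      pd_inv (dq hx) hqne i]
  -- PDE at points of U
  have hpde' : ∀ y ∈ U, A 0 0 * pd 0 (pd 0 u) y + A 0 1 * pd 0 (pd 1 u) y
      + A 1 0 * pd 1 (pd 0 u) y + A 1 1 * pd 1 (pd 1 u) y = 0 := by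
    intro y hy
    have h := hpde y hy
    simp only [Fin.sum_univ_two] at h
    simp only [show ∀ j : Fin 2, (fun y => pd j u y) = pd j u from fun _ => rfl] at h
    linarith
  -- differentiated PDE at x
  have hT : ∀ k : Fin 2, A 0 0 * pd k (pd 0 (pd 0 u)) x + A 0 1 * pd k (pd 0 (pd 1 u)) x
      + A 1 0 * pd k (pd 1 (pd 0 u)) x + A 1 1 * pd k (pd 1 (pd 1 u)) x = 0 := by
    intro k
    have hcong : (fun y => A 0 0 * pd 0 (pd 0 u) y + A 0 1 * pd 0 (pd 1 u) y
        + A 1 0 * pd 1 (pd 0 u) y + A 1 1 * pd 1 (pd 1 u) y) =ᶠ[nhds x] (fun _ => (0:ℝ)) := by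
      filter_upwards [hU.mem_nhds hx] with y hy using hpde' y hy
    have h0 := pd_congr_nhds hcong k
    rw [pd_const] at h0
    rw [pd_comb (A 0 0) (A 0 1) (A 1 0) (A 1 1) (dgg 0 0 hx) (dgg 0 1 hx)
      (dgg 1 0 hx) (dgg 1 1 hx) k] at h0
    exact h0
  -- symmetry facts
  have swapA : ∀ a b c : Fin 2, pd a (pd b (pd c u)) x = pd b (pd a (pd c u)) x :=
    fun a b c => pd_symm hU (hgC c) hx a b
  have swapB : ∀ a b c : Fin 2, pd a (pd b (pd c u)) x = pd a (pd c (pd b u)) x := by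
    intro a b c
    refine pd_congr_nhds ?_ a
    filter_upwards [hU.mem_nhds hx] with y hy using pd_symm hU hu hy b c
  have h10 : pd 1 (pd 0 u) x = pd 0 (pd 1 u) x := pd_symm hU hu hx 1 0
  have t010 : pd 0 (pd 1 (pd 0 u)) x = pd 0 (pd 0 (pd 1 u)) x := swapB 0 1 0
  have t100 : pd 1 (pd 0 (pd 0 u)) x = pd 0 (pd 0 (pd 1 u)) x := (swapA 1 0 0).trans t010
  have t101 : pd 1 (pd 0 (pd 1 u)) x = pd 0 (pd 1 (pd 1 u)) x := swapA 1 0 1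
  have t110 : pd 1 (pd 1 (pd 0 u)) x = pd 0 (pd 1 (pd 1 u)) x := (swapB 1 1 0).trans t101
  -- constraints in canonical atoms
  have hc0 := hpde' x hx
  have hT0 := hT 0
  have hT1 := hT 1
  rw [h10] at hc0
  rw [t010] at hT0
  rw [t100, t101, t110] at hT1
  -- q x value
  have hqx : q x = A 0 0 * (pd 0 u x * pd 0 u x) + (A 0 1 + A 1 0)/2 * (pd 0 u x * pd 1 u x)
      + (A 0 1 + A 1 0)/2 * (pd 1 u x * pd 0 u x) + A 1 1 * (pd 1 u x * pd 1 u x) := by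
    rw [hq]
  -- assemble
  have hD : ∀ j : Fin 2, pd j q x = _ := fun j => hDq j x hx
  simp only [Fin.sum_univ_two]
  have hB00 : ((1 / 2 : ℝ) • (A + Aᵀ)) 0 0 = A 0 0 := by
    simp [Matrix.smul_apply, Matrix.add_apply, Matrix.transpose_apply]; ring
  have hB01 : ((1 / 2 : ℝ) • (A + Aᵀ)) 0 1 = (A 0 1 + A 1 0)/2 := by
    simp [Matrix.smul_apply, Matrix.add_apply, Matrix.transpose_apply]; ring
  have hB10 : ((1 / 2 : ℝ) • (A + Aᵀ)) 1 0 = (A 0 1 + A 1 0)/2 := by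
    simp [Matrix.smul_apply, Matrix.add_apply, Matrix.transpose_apply]; ring
  have hB11 : ((1 / 2 : ℝ) • (A + Aᵀ)) 1 1 = A 1 1 := by
    simp [Matrix.smul_apply, Matrix.add_apply, Matrix.transpose_apply]; ring
  rw [hB00, hB01, hB10, hB11]
  simp only [hL, hP, hDq _ x hx, t010, t100, t101, t110, h10]
  have hinv : q x * (q x)⁻¹ = 1 := mul_inv_cancel₀ hqne
  linear_combination
    (2*(q x)⁻¹*(A 0 0 * pd 0 (pd 0 u) x + A 0 1 * pd 0 (pd 1 u) x + A 1 0 * pd 0 (pd 1 u) x + A 1 1 * pd 1 (pd 1 u) x) - 4*((q x)⁻¹)^2*((A 0 0 * pd 0 u x + (A 0 1 + A 1 0)/2 * pd 1 u x)^2 * pd 0 (pd 0 u) x + 2*(A 0 0 * pd 0 u x + (A 0 1 + A 1 0)/2 * pd 1 u x)*((A 0 1 + A 1 0)/2 * pd 0 u x + A 1 1 * pd 1 u x) * pd 0 (pd 1 u) x + ((A 0 1 + A 1 0)/2 * pd 0 u x + A 1 1 * pd 1 u x)^2 * pd 1 (pd 1 u) x)) * hc0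
    + (2*(q x)⁻¹*(A 0 0 * pd 0 u x + (A 0 1 + A 1 0)/2 * pd 1 u x)) * hT0
    + (2*(q x)⁻¹*((A 0 1 + A 1 0)/2 * pd 0 u x + A 1 1 * pd 1 u x)) * hT1
    - (4*((q x)⁻¹)^2*((A 0 0 * A 1 1 - ((A 0 1 + A 1 0)/2)^2) * (pd 0 (pd 0 u) x * pd 1 (pd 1 u) x - (pd 0 (pd 1 u) x)^2))) * hqx
    + (4*(q x)⁻¹*((A 0 0 * A 1 1 - ((A 0 1 + A 1 0)/2)^2) * (pd 0 (pd 0 u) x * pd 1 (pd 1 u) x - (pd 0 (pd 1 u) x)^2))) * hinv
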